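/- arXiv:1303.5324 — 3 statements merged into one kernel-verified Lean document; each statement's English description precedes it below -/
import Mathlib

section
/- Derivative formulas for C X⁻¹ and X⁻¹ B: in the bounded vessel setting, for every x ∈ ℝ one has σ₁∘(d/dx)[C(x)∘X(x)⁻¹] = σ₂∘C(x)∘X(x)⁻¹∘A + γ*(x)∘C(x)∘X(x)⁻¹ and (d/dx)[X(x)⁻¹∘B(x)]∘σ₁ = A_ζ∘X(x)⁻¹∘B(x)∘σ₂ − X(x)⁻¹∘B(x)∘γ*(x). -/
/-!
Conjugating the Lyapunov equation `A X + X A_ζ + B σ₁ C = 0` by `X⁻¹` gives the Riccati identity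
`X⁻¹ A + A_ζ X⁻¹ + X⁻¹ B σ₁ C X⁻¹ = 0`. By the product rule and `(X⁻¹)' = -X⁻¹ X' X⁻¹`, the
derivatives of `C X⁻¹` and `X⁻¹ B` contain `A_ζ X⁻¹`; trading it for `-X⁻¹ A - X⁻¹ B σ₁ C X⁻¹`
produces exactly the quadratic terms that make up `γ*`.
-/

open ContinuousLinearMap

/-- The linkage matrix `γ*(x) = γ + σ₂ C X⁻¹ B σ₁ - σ₁ C X⁻¹ B σ₂`. -/
noncomputable def gammaStar {H : Type*} [NormedAddCommGroup H] [NormedSpace ℂ H]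
    (σ₁ σ₂ γ : (Fin 2 → ℂ) →L[ℂ] (Fin 2 → ℂ))
    (B : ℝ → ((Fin 2 → ℂ) →L[ℂ] H)) (C : ℝ → (H →L[ℂ] (Fin 2 → ℂ)))
    (Xinv : ℝ → (H →L[ℂ] H)) (x : ℝ) : (Fin 2 → ℂ) →L[ℂ] (Fin 2 → ℂ) :=
  γ + σ₂ ∘L (((C x ∘L Xinv x) ∘L B x) ∘L σ₁) - σ₁ ∘L (((C x ∘L Xinv x) ∘L B x) ∘L σ₂)

theorem riccati_of_sylvester {R : Type*} [Ring R] {a b k x y : R} (h : a * x + x * b + k = 0)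
    (hxy : x * y = 1) (hyx : y * x = 1) : y * a + b * y + y * k * y = 0 := by
  calc y * a + b * y + y * k * y = y * a * (x * y) + y * x * b * y + y * k * y := by
        rw [hxy, hyx, mul_one, one_mul]
    _ = y * (a * x + x * b + k) * y := by noncomm_ring
    _ = 0 := by rw [h, mul_zero, zero_mul]

theorem HasDerivAt.inverse_of_mul_eq_one {𝕜 R : Type*} [NontriviallyNormedField 𝕜] [NormedRing R]
    [NormedAlgebra 𝕜 R] [HasSummableGeomSeries R] {X Y : 𝕜 → R} {X' : R} {x : 𝕜}
    (hX : HasDerivAt X X' x) (hXY : ∀ y, X y * Y y = 1) (hYX : ∀ y, Y y * X y = 1) :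
    HasDerivAt Y (-(Y x * X' * Y x)) x := by
  have hY : Y = fun y => Ring.inverse (X y) := funext fun y =>
    (Ring.inverse_unit ⟨X y, Y y, hXY y, hYX y⟩).symm
  subst hY
  have := (hasFDerivAt_ringInverse (𝕜 := 𝕜) ⟨X x, _, hXY x, hYX x⟩).comp_hasDerivAt x hX
  simpa [Function.comp_def] using this

theorem HasDerivAt.clm_comp_of_isScalarTower {𝕜 𝕜' E F G : Type*} [NontriviallyNormedField 𝕜]
    [NontriviallyNormedField 𝕜'] [NormedAlgebra 𝕜 𝕜']
    [NormedAddCommGroup E] [NormedSpace 𝕜 E] [NormedSpace 𝕜' E] [IsScalarTower 𝕜 𝕜' E]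
    [NormedAddCommGroup F] [NormedSpace 𝕜 F] [NormedSpace 𝕜' F] [IsScalarTower 𝕜 𝕜' F]
    [NormedAddCommGroup G] [NormedSpace 𝕜 G] [NormedSpace 𝕜' G] [IsScalarTower 𝕜 𝕜' G]
    {c : 𝕜 → F →L[𝕜'] G} {c' : F →L[𝕜'] G} {d : 𝕜 → E →L[𝕜'] F} {d' : E →L[𝕜'] F} {x : 𝕜}
    (hc : HasDerivAt c c' x) (hd : HasDerivAt d d' x) :
    HasDerivAt (fun y => (c y).comp (d y)) (c'.comp (d x) + (c x).comp d') x := by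
  simpa [add_comm] using
    ((compL 𝕜' E F G).bilinearRestrictScalars 𝕜).hasDerivAt_of_bilinear (fun _ => hc) (fun _ => hd)

/-- **Derivative formulas for `C X⁻¹` and `X⁻¹ B`** in the bounded vessel setting:
`σ₁ (C X⁻¹)' = σ₂ C X⁻¹ A + γ* C X⁻¹` and `(X⁻¹ B)' σ₁ = A_ζ X⁻¹ B σ₂ - X⁻¹ B γ*`. -/
theorem deriv_CXinv_and_XinvB
    {H : Type*} [NormedAddCommGroup H] [InnerProductSpace ℂ H] [CompleteSpace H]
    (σ₁ σ₁inv σ₂ γ : (Fin 2 → ℂ) →L[ℂ] (Fin 2 → ℂ))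
    (hσ₁ : σ₁ ∘L σ₁inv = 1) (hσ₁inv : σ₁inv ∘L σ₁ = 1)
    (A Aζ : H →L[ℂ] H)
    (B : ℝ → ((Fin 2 → ℂ) →L[ℂ] H))
    (C : ℝ → (H →L[ℂ] (Fin 2 → ℂ)))
    (X Xinv : ℝ → (H →L[ℂ] H))
    (hXinv : ∀ x : ℝ, X x ∘L Xinv x = 1) (hXinv' : ∀ x : ℝ, Xinv x ∘L X x = 1)
    (hB : ∀ x : ℝ, HasDerivAt B ((-((A ∘L B x) ∘L σ₂ + B x ∘L γ)) ∘L σ₁inv) x)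
    (hC : ∀ x : ℝ, HasDerivAt C (σ₁inv ∘L (-(σ₂ ∘L (C x ∘L Aζ)) + γ ∘L C x)) x)
    (hX : ∀ x : ℝ, HasDerivAt X ((B x ∘L σ₂) ∘L C x) x)
    (hLyap : ∀ x : ℝ, A ∘L X x + X x ∘L Aζ + (B x ∘L σ₁) ∘L C x = 0) :
    (∃ D : ℝ → (H →L[ℂ] (Fin 2 → ℂ)),
      (∀ x : ℝ, HasDerivAt (fun y => C y ∘L Xinv y) (D x) x) ∧
      ∀ x : ℝ, σ₁ ∘L D x =
        σ₂ ∘L ((C x ∘L Xinv x) ∘L A) +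
          gammaStar σ₁ σ₂ γ B C Xinv x ∘L (C x ∘L Xinv x)) ∧
    (∃ E : ℝ → ((Fin 2 → ℂ) →L[ℂ] H),
      (∀ x : ℝ, HasDerivAt (fun y => Xinv y ∘L B y) (E x) x) ∧
      ∀ x : ℝ, E x ∘L σ₁ =
        Aζ ∘L ((Xinv x ∘L B x) ∘L σ₂) -
          (Xinv x ∘L B x) ∘L gammaStar σ₁ σ₂ γ B C Xinv x) := by
  have hXinvDeriv x := (hX x).inverse_of_mul_eq_one hXinv hXinv'
  have hRiccati x :
      Aζ ∘L Xinv x = -(Xinv x ∘L A + Xinv x ∘L (B x ∘L (σ₁ ∘L (C x ∘L Xinv x)))) := by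
    have h := riccati_of_sylvester (hLyap x) (hXinv x) (hXinv' x)
    simp only [mul_def, comp_assoc] at h
    rw [eq_neg_iff_add_eq_zero, ← h]
    abel
  refine ⟨⟨_, fun x => (hC x).clm_comp_of_isScalarTower (hXinvDeriv x), fun x => ?_⟩,
    ⟨_, fun x => (hXinvDeriv x).clm_comp_of_isScalarTower (hB x), fun x => ?_⟩⟩
  · simp only [gammaStar, mul_def, comp_add, add_comp, sub_comp, comp_neg, neg_comp, comp_assoc,
      hRiccati, ← comp_assoc σ₁ σ₁inv, hσ₁, one_def, id_comp]
    abel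
  · have hσ₁inv' (W : (Fin 2 → ℂ) →L[ℂ] H) : (W ∘L σ₁inv) ∘L σ₁ = W := by
      rw [comp_assoc, hσ₁inv, one_def, comp_id]
    simp only [gammaStar, mul_def, comp_add, add_comp, comp_sub, comp_neg, neg_comp, ← comp_assoc,
      hRiccati, hσ₁inv']
    abel
end

section
/- Entrywise moment recursion for Sturm–Liouville parameters: let β : ℝ → ℂ be differentiable, π₁₁ := β' − β², and γ*(x) := [[−i π₁₁(x), −β(x)], [β(x), i]]. Suppose H_n : ℝ → M₂(ℂ) (n ∈ ℕ) are differentiable and satisfy, for all n and x, H_n'(x) = σ₁⁻¹σ₂ H_{n+1}(x) − H_{n+1}(x) σ₂σ₁⁻¹ + σ₁⁻¹γ*(x) H_n(x) − H_n(x) γ σ₁⁻¹, with the Sturm–Liouville parameters. Write H_n = [[H_n¹¹, H_n¹²],[H_n²¹, H_n²²]]. Then for all n and all x: (i) H_{n+1}¹¹ = i H_n²² − (H_n¹²)' + β H_n¹²; (ii) H_n¹² − H_n²¹ = i ((H_n¹¹)' − β H_n¹¹); (iii) (H_n¹² + H_n²¹)' = −i π₁₁ H_n¹¹ + β (H_n¹²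 − H_n²¹); and (iv) (H_n¹²)' is differentiable and 2i (H_n²²)' = (H_n¹²)'' − 2β (H_n¹²)'. -/
/-- Sturm–Liouville vessel parameter `σ₁ = [[0,1],[1,0]]`. -/
def SLσ₁ : Matrix (Fin 2) (Fin 2) ℂ := !![0, 1; 1, 0]

/-- Sturm–Liouville vessel parameter `σ₂ = [[1,0],[0,0]]`. -/
def SLσ₂ : Matrix (Fin 2) (Fin 2) ℂ := !![1, 0; 0, 0]

/-- Sturm–Liouville vessel parameter `γ = [[0,0],[0,i]]`. -/
noncomputable def SLγ : Matrix (Fin 2) (Fin 2) ℂ := !![0, 0; 0, Complex.I]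

/-!
Reading the vessel equation entry by entry gives four scalar identities, of which (i)–(iii) are
linear combinations. The (0,1) entry writes `(Hₙ¹²)'` as `-Hₙ₊₁¹¹ + β Hₙ¹² + i Hₙ²²`, a
differentiable function; its derivative is then eliminated with the (0,0) entry at `n + 1`
and the (1,1) entry at `n`, which gives (iv).
-/

open Complex

theorem SLσ₁_inv : SLσ₁⁻¹ = SLσ₁ :=
  Matrix.inv_eq_right_inv (by simp [SLσ₁, Matrix.one_fin_two])

/-- The vessel equation read entry by entry, with `p` in the role of `π₁₁` and `b` in that
of `β`; `A` and `B` stand for `Hₙ₊₁` and `Hₙ`. -/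
theorem sl_vessel_entries {M A B : Matrix (Fin 2) (Fin 2) ℂ} {p b : ℂ}
    (h : M = SLσ₁⁻¹ * SLσ₂ * A - A * SLσ₂ * SLσ₁⁻¹ +
      SLσ₁⁻¹ * !![-I * p, -b; b, I] * B - B * SLγ * SLσ₁⁻¹) :
    M 0 0 = b * B 0 0 + I * B 1 0 - I * B 0 1 ∧
    M 0 1 = -A 0 0 + b * B 0 1 + I * B 1 1 ∧
    M 1 0 = A 0 0 - I * p * B 0 0 - b * B 1 0 - I * B 1 1 ∧
    M 1 1 = A 0 1 - A 1 0 - I * p * B 0 1 - b * B 1 1 := by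
  subst h
  rw [SLσ₁_inv, Matrix.eta_fin_two A, Matrix.eta_fin_two B]
  simp only [SLσ₁, SLσ₂, SLγ, Matrix.mul_fin_two, Matrix.sub_apply, Matrix.add_apply,
    Matrix.of_apply, Matrix.cons_val', Matrix.cons_val_zero, Matrix.cons_val_one,
    Matrix.empty_val', Matrix.cons_val_fin_one]
  refine ⟨?_, ?_, ?_, ?_⟩ <;> ring

/-- **Entrywise moment recursion for Sturm–Liouville parameters:** if the
moments satisfy `Hₙ' = σ₁⁻¹σ₂ Hₙ₊₁ - Hₙ₊₁ σ₂σ₁⁻¹ + σ₁⁻¹γ* Hₙ - Hₙ γ σ₁⁻¹`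
with `γ* = [[-iπ₁₁, -β],[β, i]]`, `π₁₁ = β' - β²`, then the four entrywise
identities hold. -/
theorem sl_moment_recursion_entrywise
    (β β' : ℝ → ℂ)
    (hβ : ∀ x : ℝ, HasDerivAt β (β' x) x)
    (H H' : ℕ → ℝ → Matrix (Fin 2) (Fin 2) ℂ)
    (hH : ∀ (n : ℕ) (x : ℝ) (i j : Fin 2),
      HasDerivAt (fun y => H n y i j) (H' n x i j) x)
    (hrec : ∀ (n : ℕ) (x : ℝ),
      H' n x = SLσ₁⁻¹ * SLσ₂ * H (n + 1) x - H (n + 1) x * SLσ₂ * SLσ₁⁻¹ +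
        SLσ₁⁻¹ * !![-Complex.I * (β' x - β x ^ 2), -β x;
                     β x, Complex.I] * H n x - H n x * SLγ * SLσ₁⁻¹) :
    ∀ (n : ℕ) (x : ℝ),
      (H (n + 1) x 0 0 = Complex.I * H n x 1 1 - H' n x 0 1 + β x * H n x 0 1) ∧
      (H n x 0 1 - H n x 1 0 = Complex.I * (H' n x 0 0 - β x * H n x 0 0)) ∧
      (H' n x 0 1 + H' n x 1 0 =
        -Complex.I * (β' x - β x ^ 2) * H n x 0 0 + β x * (H n x 0 1 - H n x 1 0)) ∧
      (∃ w : ℝ → ℂ, (∀ y : ℝ, HasDerivAt (fun z => H' n z 0 1) (w y) y) ∧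
        ∀ y : ℝ, 2 * Complex.I * H' n y 1 1 = w y - 2 * β y * H' n y 0 1) := by
  have entries := fun n x => sl_vessel_entries (hrec n x)
  intro n x
  obtain ⟨e00, e01, e10, -⟩ := entries n x
  refine ⟨by linear_combination e01,
    by linear_combination -I * e00 + (H n x 0 1 - H n x 1 0) * I_sq,
    by linear_combination e01 + e10, ?_⟩
  have hH'01 : (fun z => H' n z 0 1) =
      fun z => -H (n + 1) z 0 0 + β z * H n z 0 1 + I * H n z 1 1 :=
    funext fun z => (entries n z).2.1
  refine ⟨fun y => -H' (n + 1) y 0 0 + (β' y * H n y 0 1 + β y * H' n y 0 1) + I * H' n y 1 1,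
    fun y => ?_, fun y => ?_⟩
  · rw [hH'01]
    exact ((hH (n + 1) y 0 0).neg.add ((hβ y).mul (hH n y 0 1))).add ((hH n y 1 1).const_mul I)
  · obtain ⟨-, e01, -, e11⟩ := entries n y
    obtain ⟨f00, -, -, -⟩ := entries (n + 1) y
    linear_combination I * e11 + f00 + β y * e01 - (β' y - β y ^ 2) * H n y 0 1 * I_sq
end

section
/- Every real sequence is a difference of two Stieltjes moment sequences: for every sequence (m_n) of real numbers (n ∈ ℕ) there exist finite positive Borel measures μ₊ and μ₋ on ℝ, each supported on [0, ∞) (i.e., μ₊((−∞,0)) = μ₋((−∞,0)) = 0), such that for every n ∈ ℕ the function x ↦ xⁿ is integrable with respect to both μ₊ and μ₋, and m_n = ∫ xⁿ dμ₊(x) − ∫ xⁿ dμ₋(x) for all n. -/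
/-!
For `T > 0`, the signed atomic measure `∑ⱼ (-1)^(n-j) C(n,j) δ_{jT}` (`0 ≤ j ≤ n`) has as `k`-th
moment `Tᵏ` times the `n`-th forward difference of `x ↦ xᵏ` at `0`: it vanishes for `k < n` and
equals `Tⁿ n!` for `k = n`. Adding one such block for each order `n`, with coefficient chosen
recursively to correct the `n`-th moment, matches every moment after finitely many blocks. Taking
the scale `T` of the `n`-th block large makes its absolute moments of order `< n` at most `2⁻ⁿ`, so
all moment series converge absolutely, and the positive and negative parts of the resulting signed
atomic measure are the two measures sought.
-/

open MeasureTheory Finset Nat fwdDiff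
open scoped NNReal ENNReal

noncomputable section

section AtomicMeasure

variable {ι α E : Type*} [MeasurableSpace α] [NormedAddCommGroup E]

def atomicMeasure (c : ι → ℝ≥0) (x : ι → α) : Measure α :=
  Measure.sum fun i => (c i : ℝ≥0∞) • Measure.dirac (x i)

lemma atomicMeasure_apply_eq_zero {c : ι → ℝ≥0} {x : ι → α} {s : Set α} (hs : MeasurableSet s)
    (hx : ∀ i, x i ∉ s) : atomicMeasure c x s = 0 :=
  (Measure.sum_apply_eq_zero' hs).2 fun i => by simp [Measure.dirac_apply' _ hs, hx i]

lemma summable_toNNReal_mul {w g : ι → ℝ} (hg : ∀ i, 0 ≤ g i)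
    (h : Summable fun i => |w i| * g i) : Summable fun i => ((w i).toNNReal : ℝ) * g i :=
  h.of_nonneg_of_le (fun i => mul_nonneg (NNReal.coe_nonneg _) (hg i)) fun i =>
    mul_le_mul_of_nonneg_right (by simp [Real.coe_toNNReal', le_abs_self]) (hg i)

variable [Countable ι] [MeasurableSingletonClass α] {c : ι → ℝ≥0} {x : ι → α} {f : α → E}

lemma integrable_atomicMeasure (hf : Summable fun i => c i * ‖f (x i)‖) :
    Integrable f (atomicMeasure c x) :=
  integrable_sum_dirac (fun _ => ENNReal.coe_ne_top) (by simpa using hf)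

lemma isFiniteMeasure_atomicMeasure (hc : Summable fun i => (c i : ℝ)) :
    IsFiniteMeasure (atomicMeasure c x) :=
  (integrable_const_iff_isFiniteMeasure one_ne_zero).1
    (integrable_atomicMeasure (f := fun _ => (1 : ℝ)) (by simpa using hc))

lemma integral_atomicMeasure [NormedSpace ℝ E] [CompleteSpace E]
    (hf : Summable fun i => c i * ‖f (x i)‖) :
    ∫ a, f a ∂atomicMeasure c x = ∑' i, (c i : ℝ) • f (x i) :=
  (integral_sum_dirac_eq_tsum (fun _ => ENNReal.coe_ne_top) (by simpa using hf)).trans (by simp)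

lemma integral_atomicMeasure_toNNReal_sub_toNNReal_neg [NormedSpace ℝ E] [CompleteSpace E]
    {w : ι → ℝ} (hf : Summable fun i => |w i| * ‖f (x i)‖) :
    ∫ a, f a ∂atomicMeasure (fun i => (w i).toNNReal) x -
      ∫ a, f a ∂atomicMeasure (fun i => (-w i).toNNReal) x = ∑' i, w i • f (x i) := by
  have hpos := summable_toNNReal_mul (fun _ => norm_nonneg _) hf
  have hneg := summable_toNNReal_mul (w := fun i => -w i) (fun _ => norm_nonneg _)
    (by simpa using hf)
  rw [integral_atomicMeasure hpos, integral_atomicMeasure hneg,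
    ← (Summable.of_norm (by simpa only [norm_smul, NNReal.norm_eq] using hpos)).tsum_sub
      (Summable.of_norm (by simpa only [norm_smul, NNReal.norm_eq] using hneg))]
  simp [← sub_smul, Real.coe_toNNReal', max_zero_sub_max_neg_zero_eq_self]

end AtomicMeasure

lemma sum_alternating_choose_mul_pow (n k : ℕ) :
    ∑ j ∈ range (n + 1), (-1 : ℝ) ^ (n - j) * n.choose j * (j : ℝ) ^ k =
      (Δ_[1])^[n] (fun x : ℝ => x ^ k) 0 := by
  simp [fwdDiff_iter_eq_sum_shift]

section Block

variable (d : ℝ) (n : ℕ)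

-- `4ⁿ nⁿ` is what makes `sum_abs_blockWeight_mul_pow_le` hold.
def blockScale : ℝ := 1 + |d| * 4 ^ n * n ^ n

def blockWeight (j : ℕ) : ℝ := d / (blockScale d n ^ n * n !) * ((-1) ^ (n - j) * n.choose j)

def blockPoint (j : ℕ) : ℝ := j * blockScale d n

def blockMoment (k : ℕ) : ℝ := ∑ j ∈ range (n + 1), blockWeight d n j * blockPoint d n j ^ k

lemma one_le_blockScale : 1 ≤ blockScale d n :=
  le_add_of_nonneg_right (by positivity)

lemma blockScale_pos : 0 < blockScale d n :=
  zero_lt_one.trans_le (one_le_blockScale d n)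

lemma blockPoint_nonneg (j : ℕ) : 0 ≤ blockPoint d n j :=
  mul_nonneg j.cast_nonneg (blockScale_pos d n).le

variable {d n}

lemma blockWeight_eq_zero_of_lt {j : ℕ} (h : n < j) : blockWeight d n j = 0 := by
  simp [blockWeight, Nat.choose_eq_zero_of_lt h]

lemma hasSum_blockWeight_mul {g : ℕ → ℝ → ℝ} (hg : ∀ j, g j 0 = 0) :
    HasSum (fun j => g j (blockWeight d n j)) (∑ j ∈ range (n + 1), g j (blockWeight d n j)) :=
  hasSum_sum_of_ne_finset_zero fun j hj => by
    rw [blockWeight_eq_zero_of_lt (by simpa using hj), hg]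

variable (d n)

lemma blockMoment_eq (k : ℕ) :
    blockMoment d n k =
      d / (blockScale d n ^ n * n !) * blockScale d n ^ k * (Δ_[1])^[n] (fun x : ℝ => x ^ k) 0 := by
  rw [← sum_alternating_choose_mul_pow, mul_sum, blockMoment]
  refine sum_congr rfl fun j _ => ?_
  rw [blockWeight, blockPoint]
  ring

lemma blockMoment_of_lt {k : ℕ} (h : k < n) : blockMoment d n k = 0 := by
  simp [blockMoment_eq, fwdDiff_iter_pow_eq_zero_of_lt h]

lemma blockMoment_self : blockMoment d n n = d := by
  have := blockScale_pos d n
  rw [blockMoment_eq, fwdDiff_iter_eq_factorial, Pi.natCast_apply]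
  field_simp

end Block

lemma sum_abs_blockWeight_mul_pow_le (d : ℝ) {n k : ℕ} (h : k < n) :
    ∑ j ∈ range (n + 1), |blockWeight d n j| * blockPoint d n j ^ k ≤ (1 / 2) ^ n := by
  set T := blockScale d n
  have hT : 1 ≤ T := one_le_blockScale d n
  have hT0 : 0 < T := blockScale_pos d n
  have hn : (1 : ℝ) ≤ n := by exact_mod_cast h.trans_le' k.zero_le
  have habs (j : ℕ) : |blockWeight d n j| = |d| / (T ^ n * n !) * n.choose j := by
    simp [blockWeight, abs_mul, abs_div, abs_of_pos hT0, T]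
  calc ∑ j ∈ range (n + 1), |blockWeight d n j| * blockPoint d n j ^ k
      ≤ ∑ j ∈ range (n + 1), |d| / (T ^ n * n !) * n.choose j * (n * T) ^ k := by
        refine sum_le_sum fun j hj => ?_
        rw [habs, blockPoint]
        have : (j : ℝ) ≤ n := by exact_mod_cast Nat.lt_succ_iff.1 (mem_range.1 hj)
        gcongr
    _ = |d| * 2 ^ n * n ^ k * T ^ k / (T ^ n * n !) := by
        rw [← sum_mul, ← mul_sum]
        rw_mod_cast [Nat.sum_range_choose]
        push_cast
        ring
    _ ≤ |d| * 2 ^ n * n ^ n * T ^ (n - 1) / (T ^ n * 1) := by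
        gcongr
        · omega
        · exact_mod_cast n.factorial_pos
    _ = |d| * 4 ^ n * n ^ n / T / 2 ^ n := by
        rw [show T ^ n = T * T ^ (n - 1) by rw [← _root_.pow_succ']; congr; omega,
          show (4 : ℝ) ^ n = 2 ^ n * 2 ^ n by rw [← mul_pow]; norm_num]
        field_simp
    _ ≤ 1 / 2 ^ n := by
        gcongr
        exact (div_le_one hT0).2 (le_add_of_nonneg_left zero_le_one)
    _ = (1 / 2) ^ n := (one_div_pow 2 n).symm

section BlockSums

variable (r : ℕ → ℝ)

lemma summable_abs_blockWeight_mul_pow (k : ℕ) :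
    Summable fun p : ℕ × ℕ => |blockWeight (r p.1) p.1 p.2| * blockPoint (r p.1) p.1 p.2 ^ k := by
  have hfiber (n : ℕ) := hasSum_blockWeight_mul (d := r n) (n := n)
    (g := fun j w => |w| * blockPoint (r n) n j ^ k) (fun j => by simp)
  refine (summable_prod_of_nonneg fun p => ?_).2 ⟨fun n => (hfiber n).summable, ?_⟩
  · exact mul_nonneg (abs_nonneg _) (pow_nonneg (blockPoint_nonneg _ _ _) k)
  refine Summable.of_norm_bounded_eventually_nat summable_geometric_two ?_
  filter_upwards [Filter.eventually_gt_atTop k] with n hn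
  rw [(hfiber n).tsum_eq, Real.norm_of_nonneg (sum_nonneg fun j _ =>
    mul_nonneg (abs_nonneg _) (pow_nonneg (blockPoint_nonneg _ _ _) k))]
  exact sum_abs_blockWeight_mul_pow_le (r n) hn

lemma tsum_blockWeight_mul_pow (k : ℕ) :
    ∑' p : ℕ × ℕ, blockWeight (r p.1) p.1 p.2 * blockPoint (r p.1) p.1 p.2 ^ k =
      ∑ n ∈ range (k + 1), blockMoment (r n) n k := by
  have hsum : Summable fun p : ℕ × ℕ =>
      blockWeight (r p.1) p.1 p.2 * blockPoint (r p.1) p.1 p.2 ^ k :=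
    .of_norm <| (summable_abs_blockWeight_mul_pow r k).congr fun p => by
      rw [norm_mul, norm_pow, Real.norm_eq_abs, Real.norm_of_nonneg (blockPoint_nonneg _ _ _)]
  rw [hsum.tsum_prod, tsum_congr fun n => (hasSum_blockWeight_mul (d := r n) (n := n)
    (g := fun j w => w * blockPoint (r n) n j ^ k) (fun j => zero_mul _)).tsum_eq]
  exact tsum_eq_sum fun n hn => blockMoment_of_lt _ _ (by simpa using hn)

end BlockSums

-- The part of `m k` not yet produced by the blocks of order `< k`; it is the `k`-th moment of the
-- block of order `k`.
def momentResidual (m : ℕ → ℝ) : ℕ → ℝ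
  | k => m k - ∑ n : Fin k, blockMoment (momentResidual m n) n k

lemma sum_blockMoment_momentResidual (m : ℕ → ℝ) (k : ℕ) :
    ∑ n ∈ range (k + 1), blockMoment (momentResidual m n) n k = m k := by
  rw [sum_range_succ, blockMoment_self, momentResidual,
    Fin.sum_univ_eq_sum_range (fun n => blockMoment (momentResidual m n) n k)]
  ring

lemma exists_signed_atoms_with_moments (m : ℕ → ℝ) :
    ∃ w x : ℕ × ℕ → ℝ, (∀ i, 0 ≤ x i) ∧ (∀ k, Summable fun i => |w i| * x i ^ k) ∧
      ∀ k, ∑' i, w i * x i ^ k = m k :=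
  ⟨fun p => blockWeight (momentResidual m p.1) p.1 p.2,
    fun p => blockPoint (momentResidual m p.1) p.1 p.2,
    fun _ => blockPoint_nonneg _ _ _, summable_abs_blockWeight_mul_pow _,
    fun k => (tsum_blockWeight_mul_pow _ k).trans (sum_blockMoment_momentResidual m k)⟩

end

/-- **Every real sequence is a difference of two Stieltjes moment sequences:**
for any real sequence `(mₙ)` there are finite positive Borel measures `μ₊`, `μ₋`
supported on `[0,∞)` with all power moments finite such that
`mₙ = ∫ xⁿ dμ₊ - ∫ xⁿ dμ₋` for all `n`. -/
theorem real_seq_is_difference_of_stieltjes_moment_sequences (m : ℕ → ℝ) :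
    ∃ μp μn : Measure ℝ, IsFiniteMeasure μp ∧ IsFiniteMeasure μn ∧
      μp (Set.Iio 0) = 0 ∧ μn (Set.Iio 0) = 0 ∧
      (∀ n : ℕ, Integrable (fun x : ℝ => x ^ n) μp) ∧
      (∀ n : ℕ, Integrable (fun x : ℝ => x ^ n) μn) ∧
      (∀ n : ℕ, m n = (∫ x : ℝ, x ^ n ∂μp) - ∫ x : ℝ, x ^ n ∂μn) := by
  obtain ⟨w, x, hx, hw, hm⟩ := exists_signed_atoms_with_moments m
  have hf (n : ℕ) : Summable fun i => |w i| * ‖x i ^ n‖ := by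
    simpa only [norm_pow, Real.norm_of_nonneg (hx _)] using hw n
  have hpos (n : ℕ) := summable_toNNReal_mul (fun _ => norm_nonneg _) (hf n)
  have hneg (n : ℕ) := summable_toNNReal_mul (w := fun i => -w i) (fun _ => norm_nonneg _)
    (by simpa only [abs_neg] using hf n)
  have hsupp : ∀ i, x i ∉ Set.Iio 0 := fun i => not_lt.2 (hx i)
  refine ⟨atomicMeasure (fun i => (w i).toNNReal) x, atomicMeasure (fun i => (-w i).toNNReal) x,
    isFiniteMeasure_atomicMeasure (by simpa using hpos 0),
    isFiniteMeasure_atomicMeasure (by simpa using hneg 0),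
    atomicMeasure_apply_eq_zero measurableSet_Iio hsupp,
    atomicMeasure_apply_eq_zero measurableSet_Iio hsupp,
    fun n => integrable_atomicMeasure (hpos n), fun n => integrable_atomicMeasure (hneg n),
    fun n => ?_⟩
  rw [integral_atomicMeasure_toNNReal_sub_toNNReal_neg (f := fun a => a ^ n) (hf n), ← hm n]
  simp only [smul_eq_mul]
end
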